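/- For the Grushin inversion x_i = x̃_i d(z̃,0)^{-2}, y_j = ỹ_j d(z̃,0)^{-2-2γ}, the Jacobian entries satisfy, for each fixed i: Σ_{k=1}^N (∂x_i/∂x̃_k)² + |x̃|^{2γ} Σ_{h=1}^l (∂x_i/∂ỹ_h)² = d(z̃,0)^{-4}. -/

import Mathlib

open MeasureTheory Real

noncomputable section

variable {N l : ℕ}

/-- squared Euclidean norm -/
def nsq {n : ℕ} (x : Fin n → ℝ) : ℝ := ∑ i, x i ^ 2

/-- partial derivative in the `i`-th `x` direction -/
def pdx (u : (Fin N → ℝ) × (Fin l → ℝ) → ℝ) (i : Fin N)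
    (z : (Fin N → ℝ) × (Fin l → ℝ)) : ℝ :=
  deriv (fun t => u (Function.update z.1 i t, z.2)) (z.1 i)

/-- partial derivative in the `j`-th `y` direction -/
def pdy (u : (Fin N → ℝ) × (Fin l → ℝ) → ℝ) (j : Fin l)
    (z : (Fin N → ℝ) × (Fin l → ℝ)) : ℝ :=
  deriv (fun t => u (z.1, Function.update z.2 j t)) (z.2 j)

/-- Grushin operator `Δ_γ u = Δ_x u + |x|^{2γ} Δ_y u` -/
def grushinLap (γ : ℝ) (u : (Fin N → ℝ) × (Fin l → ℝ) → ℝ)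
    (z : (Fin N → ℝ) × (Fin l → ℝ)) : ℝ :=
  (∑ i, pdx (pdx u i) i z) + (nsq z.1) ^ γ * ∑ j, pdy (pdy u j) j z

/-- the Grushin distance to the origin:
`d(z,0) = ((1/(1+γ)²)|x|^{2+2γ} + |y|²)^{1/(2+2γ)}` (note `|x|^{2+2γ} = (nsq x)^{1+γ}`). -/
def gd (γ : ℝ) (z : (Fin N → ℝ) × (Fin l → ℝ)) : ℝ :=
  ((1 / (1 + γ) ^ 2) * (nsq z.1) ^ (1 + γ) + nsq z.2) ^ (1 / (2 + 2 * γ))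

/-- the Grushin inversion `x̃ = x/d², ỹ = y/d^{2+2γ}` -/
def ginv (γ : ℝ) (z : (Fin N → ℝ) × (Fin l → ℝ)) : (Fin N → ℝ) × (Fin l → ℝ) :=
  (fun i => z.1 i / gd γ z ^ 2, fun j => z.2 j / gd γ z ^ (2 + 2 * γ))

/-- divergence of a vector field on `ℝ^N × ℝ^l` -/
def gdiv (X : (Fin N → ℝ) × (Fin l → ℝ) → (Fin N → ℝ) × (Fin l → ℝ))
    (z : (Fin N → ℝ) × (Fin l → ℝ)) : ℝ :=
  (∑ i, pdx (fun w => (X w).1 i) i z) + ∑ j, pdy (fun w => (X w).2 j) j z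

/-- Euclidean dot product on `ℝ^N × ℝ^l` -/
def gdot (v w : (Fin N → ℝ) × (Fin l → ℝ)) : ℝ :=
  (∑ i, v.1 i * w.1 i) + ∑ j, v.2 j * w.2 j

/-! Put `S = gd γ z ^ (2 + 2γ)` and `m = 1/(1+γ)`. The `i`-th component of the inversion is
`x_i S^{-m}`, so its `x`-gradient is `S^{-m} e_i - 2 m² |x|^{2γ} x_i S^{-m-1} x` and its
`y`-gradient is `-2 m x_i S^{-m-1} y`. Expanding the squares, every term other than `S^{-2m}`
carries the factor `-S + m² |x|^{2γ} |x|² + |y|²`, which vanishes by the definition of `S`. -/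

open Function

lemma nsq_nonneg {n : ℕ} (x : Fin n → ℝ) : 0 ≤ nsq x :=
  Finset.sum_nonneg fun i _ => sq_nonneg (x i)

lemma nsq_pos {n : ℕ} {x : Fin n → ℝ} (hx : x ≠ 0) : 0 < nsq x := by
  obtain ⟨j, hj⟩ := Function.ne_iff.1 hx
  exact Finset.sum_pos' (fun i _ => sq_nonneg (x i)) ⟨j, Finset.mem_univ j, sq_pos_of_ne_zero hj⟩

lemma hasDerivAt_nsq_update {n : ℕ} (x : Fin n → ℝ) (k : Fin n) :
    HasDerivAt (fun t => nsq (update x k t)) (2 * x k) (x k) := by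
  have hcoord (j : Fin n) : HasDerivAt (fun t => update x k t j ^ 2)
      (2 * x j * (Pi.single k 1 : Fin n → ℝ) j) (x k) := by
    simpa using ((hasDerivAt_pi.1 (hasDerivAt_update x k (x k))) j).fun_pow 2
  refine (HasDerivAt.fun_sum (u := Finset.univ) fun j _ => hcoord j).congr_deriv ?_
  simp [Pi.single_apply]

lemma sum_sq_mul_single_sub {n : ℕ} (x : Fin n → ℝ) (i : Fin n) (a b : ℝ) :
    ∑ k, (a * (Pi.single k 1 : Fin n → ℝ) i - b * x k) ^ 2
      = a ^ 2 - 2 * a * b * x i + b ^ 2 * nsq x := by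
  simp only [sub_sq, Finset.sum_add_distrib, Finset.sum_sub_distrib, nsq, mul_pow, ← Finset.mul_sum]
  simp only [Pi.single_apply, ite_pow, one_pow, ne_eq, OfNat.ofNat_ne_zero, not_false_eq_true,
    zero_pow, Finset.sum_ite_eq, Finset.mem_univ, ↓reduceIte, mul_one, mul_ite, mul_zero, ite_mul,
    zero_mul]
  ring

lemma sum_mul_sq {n : ℕ} (x : Fin n → ℝ) (c : ℝ) : ∑ k, (c * x k) ^ 2 = c ^ 2 * nsq x := by
  simp only [nsq, mul_pow, Finset.mul_sum]

/-- `gdPow γ z = gd γ z ^ (2 + 2γ)`. -/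
def gdPow (γ : ℝ) (z : (Fin N → ℝ) × (Fin l → ℝ)) : ℝ :=
  1 / (1 + γ) ^ 2 * nsq z.1 ^ (1 + γ) + nsq z.2

lemma gdPow_nonneg (γ : ℝ) (z : (Fin N → ℝ) × (Fin l → ℝ)) : 0 ≤ gdPow γ z :=
  add_nonneg (mul_nonneg (by positivity) (rpow_nonneg (nsq_nonneg _) _)) (nsq_nonneg _)

lemma gdPow_pos {γ : ℝ} (hγ : 1 + γ ≠ 0) {z : (Fin N → ℝ) × (Fin l → ℝ)} (hx : z.1 ≠ 0) :
    0 < gdPow γ z :=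
  add_pos_of_pos_of_nonneg (mul_pos (by positivity) (rpow_pos_of_pos (nsq_pos hx) _))
    (nsq_nonneg _)

lemma gdPow_eq {γ : ℝ} {z : (Fin N → ℝ) × (Fin l → ℝ)} (hx : z.1 ≠ 0) :
    gdPow γ z = (1 + γ)⁻¹ ^ 2 * nsq z.1 ^ γ * nsq z.1 + nsq z.2 := by
  rw [gdPow, add_comm 1 γ, rpow_add_one (nsq_pos hx).ne', one_div, inv_pow, mul_assoc]

lemma gd_rpow (γ : ℝ) (z : (Fin N → ℝ) × (Fin l → ℝ)) (e : ℝ) :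
    gd γ z ^ e = gdPow γ z ^ (e / 2 * (1 + γ)⁻¹) := by
  rw [show gd γ z = gdPow γ z ^ (1 / (2 + 2 * γ)) from rfl, ← rpow_mul (gdPow_nonneg γ z),
    show (2 : ℝ) + 2 * γ = 2 * (1 + γ) by ring, one_div, mul_inv]
  ring_nf

lemma ginv_fst_apply (γ : ℝ) (z : (Fin N → ℝ) × (Fin l → ℝ)) (i : Fin N) :
    (ginv γ z).1 i = z.1 i * gdPow γ z ^ (-(1 + γ)⁻¹) := by
  rw [show (ginv γ z).1 i = z.1 i / gd γ z ^ 2 from rfl, div_eq_mul_inv, ← rpow_natCast, gd_rpow,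
    ← rpow_neg (gdPow_nonneg γ z)]
  norm_num

lemma gd_rpow_neg_four (γ : ℝ) (z : (Fin N → ℝ) × (Fin l → ℝ)) :
    gd γ z ^ (-4 : ℝ) = (gdPow γ z ^ (-(1 + γ)⁻¹)) ^ 2 := by
  rw [gd_rpow, ← rpow_natCast, ← rpow_mul (gdPow_nonneg γ z)]
  ring_nf

lemma hasDerivAt_gdPow_update_fst {γ : ℝ} (hγ : 1 + γ ≠ 0) {z : (Fin N → ℝ) × (Fin l → ℝ)}
    (hx : z.1 ≠ 0) (k : Fin N) :
    HasDerivAt (fun t => gdPow γ (update z.1 k t, z.2))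
      (2 * (1 + γ)⁻¹ * nsq z.1 ^ γ * z.1 k) (z.1 k) := by
  have hQ := (hasDerivAt_nsq_update z.1 k).rpow_const (p := 1 + γ)
    (Or.inl (by simpa using (nsq_pos hx).ne'))
  refine ((hQ.const_mul (1 / (1 + γ) ^ 2)).add_const (nsq z.2)).congr_deriv ?_
  field_simp
  simp

lemma hasDerivAt_gdPow_update_snd (γ : ℝ) (z : (Fin N → ℝ) × (Fin l → ℝ)) (h : Fin l) :
    HasDerivAt (fun t => gdPow γ (z.1, update z.2 h t)) (2 * z.2 h) (z.2 h) :=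
  (hasDerivAt_nsq_update z.2 h).const_add (1 / (1 + γ) ^ 2 * nsq z.1 ^ (1 + γ))

lemma pdx_ginv_fst {γ : ℝ} (hγ : 1 + γ ≠ 0) {z : (Fin N → ℝ) × (Fin l → ℝ)} (hx : z.1 ≠ 0)
    (i k : Fin N) :
    pdx (fun w => (ginv γ w).1 i) k z
      = gdPow γ z ^ (-(1 + γ)⁻¹) * (Pi.single k 1 : Fin N → ℝ) i
        - 2 * (1 + γ)⁻¹ ^ 2 * nsq z.1 ^ γ * z.1 i * gdPow γ z ^ (-(1 + γ)⁻¹ - 1) * z.1 k := by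
  simp only [pdx, ginv_fst_apply]
  have hS := (hasDerivAt_gdPow_update_fst hγ hx k).rpow_const (p := -(1 + γ)⁻¹)
    (Or.inl (by simpa using (gdPow_pos hγ hx).ne'))
  refine (((hasDerivAt_pi.1 (hasDerivAt_update z.1 k (z.1 k))) i).mul hS).congr_deriv ?_ |>.deriv
  simp only [update_eq_self]
  ring

lemma pdy_ginv_fst {γ : ℝ} (hγ : 1 + γ ≠ 0) {z : (Fin N → ℝ) × (Fin l → ℝ)} (hx : z.1 ≠ 0)
    (i : Fin N) (h : Fin l) :
    pdy (fun w => (ginv γ w).1 i) h z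
      = -(2 * (1 + γ)⁻¹ * z.1 i * gdPow γ z ^ (-(1 + γ)⁻¹ - 1)) * z.2 h := by
  simp only [pdy, ginv_fst_apply]
  have hS := (hasDerivAt_gdPow_update_snd γ z h).rpow_const (p := -(1 + γ)⁻¹)
    (Or.inl (by simpa using (gdPow_pos hγ hx).ne'))
  refine ((hS.const_mul (z.1 i)).congr_deriv ?_).deriv
  simp only [update_eq_self]
  ring

/-- for the Grushin inversion `x_i = x̃_i d(z̃,0)^{-2}`,
`Σ_k (∂x_i/∂x̃_k)² + |x̃|^{2γ} Σ_h (∂x_i/∂ỹ_h)² = d(z̃,0)^{-4}`. -/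
theorem ginv_jacobian_x_diag (γ : ℝ) (hγ : 0 ≤ γ)
    (z : (Fin N → ℝ) × (Fin l → ℝ)) (hx : z.1 ≠ 0) (i : Fin N) :
    (∑ k, pdx (fun w => (ginv γ w).1 i) k z ^ 2)
        + (nsq z.1) ^ γ * ∑ h, pdy (fun w => (ginv γ w).1 i) h z ^ 2
      = gd γ z ^ (-4 : ℝ) := by
  have hγ₁ : 1 + γ ≠ 0 := by linarith
  have hSpow : gdPow γ z ^ (-(1 + γ)⁻¹) = gdPow γ z ^ (-(1 + γ)⁻¹ - 1) * gdPow γ z := by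
    rw [← rpow_add_one (gdPow_pos hγ₁ hx).ne', sub_add_cancel]
  simp only [pdx_ginv_fst hγ₁ hx, pdy_ginv_fst hγ₁ hx, sum_sq_mul_single_sub, sum_mul_sq,
    gd_rpow_neg_four]
  rw [hSpow]
  linear_combination (-(4 * (1 + γ)⁻¹ ^ 2 * nsq z.1 ^ γ * z.1 i ^ 2
    * (gdPow γ z ^ (-(1 + γ)⁻¹ - 1)) ^ 2)) * gdPow_eq (γ := γ) hx
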